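/- Newton iteration step for the nonlinear ODE system: assume $H_\mathrm{f}(0)$ is invertible in $M_g(K)$. Let $m > 0$, $n = 2m$, and let $X_m \in (tK[[t]])^g$ satisfy $H_\mathrm{f}(X_m) \cdot X_m' \equiv G \pmod{t^m}$. Then $X_n := X_m + H_\mathrm{f}(X_m)^{-1} \int (G - H_\mathrm{f}(X_m) X_m')\,dt$ satisfies $H_\mathrm{f}(X_n) \cdot X_n' \equiv G \pmod{t^{n}}$. -/

import Mathlib

/-! Since `f_ij(y) y' = (F_ij(y))'` for `F_ij = ∫ f_ij`, the system `H_f(X) X' = G` is the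
derivative of the integrated system `Φ(X) = ∫ G`, where `Φ_i(X) = ∑_j F_ij(x_j)` has Jacobian
`H_f(X)`. The update is exactly Newton's step `X + H_f(X)⁻¹ (∫ G - Φ(X))` for this system. If the
residual `∫ G - Φ(X)` is `O(t^{m+1})`, so is the correction, and Taylor's formula makes the new
residual `O(t^{2m+2})`; differentiating gives the claim modulo `t^{2m+1}`. -/

open PowerSeries

/-- Composition `f ∘ x` of formal power series, well defined when `x(0) = 0`. -/
noncomputable def pscomp {K : Type*} [Field K] (f x : PowerSeries K) : PowerSeries K :=
  PowerSeries.mk fun n =>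
    PowerSeries.coeff (R := K) n
      (∑ k ∈ Finset.range (n + 1), PowerSeries.C (R := K) (PowerSeries.coeff (R := K) k f) * x ^ k)

/-- Formal derivative of a power series. -/
noncomputable def psderiv {K : Type*} [Field K] (f : PowerSeries K) : PowerSeries K :=
  PowerSeries.mk fun n => ((n + 1 : ℕ) : K) * PowerSeries.coeff (R := K) (n + 1) f

/-- Formal antiderivative with zero constant term. -/
noncomputable def psint {K : Type*} [Field K] (f : PowerSeries K) : PowerSeries K :=
  PowerSeries.mk fun n => if n = 0 then 0 else ((n : ℕ) : K)⁻¹ * PowerSeries.coeff (R := K) (n - 1) f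

/-- The matrix `H_f(X) = (f_{ij}(x_j))_{ij}` obtained by composing the entries of `f`
with the coordinates of `X` (the entry in column `j` is composed with `x_j`, matching
the matrix-vector product `H_f(X) · X'`). -/
noncomputable def Hf {K : Type*} [Field K] {g : ℕ}
    (f : Matrix (Fin g) (Fin g) (PowerSeries K)) (X : Fin g → PowerSeries K) :
    Matrix (Fin g) (Fin g) (PowerSeries K) :=
  Matrix.of fun i j => pscomp (f i j) (X j)

/-- `H_f(0)`, the matrix of constant coefficients of `f`. -/
noncomputable def Hf0 {K : Type*} [Field K] {g : ℕ}
    (f : Matrix (Fin g) (Fin g) (PowerSeries K)) : Matrix (Fin g) (Fin g) K :=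
  Matrix.of fun i j => PowerSeries.constantCoeff (R := K) (f i j)

/-- One step of the Newton iteration:
`X_n = X_m + H_f(X_m)⁻¹ ∫ (G - H_f(X_m) · X_m') dt`. -/
noncomputable def newtonStep {K : Type*} [Field K] {g : ℕ}
    (f : Matrix (Fin g) (Fin g) (PowerSeries K)) (G Xm : Fin g → PowerSeries K) :
    Fin g → PowerSeries K :=
  fun i => Xm i +
    ((Hf f Xm)⁻¹.mulVec
      (fun j => psint (G j - (Hf f Xm).mulVec (fun i' => psderiv (Xm i')) j))) i

theorem Polynomial.sq_dvd_aeval_add_sub {R S : Type*} [CommRing R] [CommRing S] [Algebra R S]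
    (p : Polynomial R) (x y : S) :
    y ^ 2 ∣ p.aeval (x + y) - p.aeval x - (Polynomial.derivative p).aeval x * y := by
  obtain ⟨c, hc⟩ := (p.map (algebraMap R S)).exists_mul_sq_add_linear_part_eq_eval_add x y
  simp only [Polynomial.derivative_map, Polynomial.eval_map_algebraMap] at hc
  exact ⟨c, by rw [← hc]; ring⟩

namespace PowerSeries

variable {R : Type*} [CommRing R]

theorem X_pow_dvd_sub_iff {n : ℕ} {a b : R⟦X⟧} :
    X ^ n ∣ a - b ↔ ∀ k < n, coeff k a = coeff k b := by
  simp only [X_pow_dvd_iff, map_sub, sub_eq_zero]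

theorem X_pow_dvd_derivative {n : ℕ} {f : R⟦X⟧} (h : X ^ (n + 1) ∣ f) :
    X ^ n ∣ d⁄dX R f := by
  rw [X_pow_dvd_iff] at h ⊢
  intro k hk
  rw [coeff_derivative, h (k + 1) (by omega), zero_mul]

theorem X_pow_succ_dvd_of_derivative [IsAddTorsionFree R] {n : ℕ} {f : R⟦X⟧}
    (hf : constantCoeff f = 0) (h : X ^ n ∣ d⁄dX R f) : X ^ (n + 1) ∣ f := by
  rw [X_pow_dvd_iff] at h ⊢
  rintro (_ | k) hk
  · simpa using hf
  · have := h k (by omega)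
    rwa [coeff_derivative, ← Nat.cast_succ, ← nsmul_eq_mul',
      nsmul_eq_zero_iff_right k.succ_ne_zero] at this

theorem X_pow_dvd_subst {n : ℕ} {y f : R⟦X⟧} (hy : constantCoeff y = 0) (h : X ^ n ∣ f) :
    X ^ n ∣ f.subst y := by
  obtain ⟨u, rfl⟩ := h
  have hsub := HasSubst.of_constantCoeff_zero' hy
  rw [subst_mul hsub, subst_pow hsub, subst_X hsub]
  exact (pow_dvd_pow_of_dvd (X_dvd_iff.2 hy) n).mul_right _

theorem X_pow_dvd_subst_sub_aeval_trunc {y : R⟦X⟧} (hy : constantCoeff y = 0) (f : R⟦X⟧)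
    (n : ℕ) :
    X ^ n ∣ f.subst y - Polynomial.aeval y (trunc n f) := by
  have hsub := HasSubst.of_constantCoeff_zero' hy
  rw [← subst_coe hsub, ← subst_sub hsub]
  exact X_pow_dvd_subst hy ⟨_, sub_eq_of_eq_add (eq_X_pow_mul_shift_add_trunc n f)⟩

theorem X_pow_dvd_subst_add_sub {x δ : R⟦X⟧} (hx : constantCoeff x = 0)
    (hδ0 : constantCoeff δ = 0) {n : ℕ} (hδ : X ^ n ∣ δ) (f : R⟦X⟧) :
    X ^ (2 * n) ∣ f.subst (x + δ) - f.subst x - (d⁄dX R f).subst x * δ := by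
  have hxδ : constantCoeff (x + δ) = 0 := by rw [map_add, hx, hδ0, add_zero]
  have hδ2 : X ^ (2 * n) ∣ δ ^ 2 := by
    rw [mul_comm, pow_mul]
    exact pow_dvd_pow_of_dvd hδ 2
  have h₁ := (pow_dvd_pow X (2 * n).le_succ).trans (X_pow_dvd_subst_sub_aeval_trunc hxδ f _)
  have h₂ := (pow_dvd_pow X (2 * n).le_succ).trans (X_pow_dvd_subst_sub_aeval_trunc hx f _)
  have h₃ := (X_pow_dvd_subst_sub_aeval_trunc hx (d⁄dX R f) (2 * n)).mul_right δ
  have h₄ := hδ2.trans ((trunc (2 * n + 1) f).sq_dvd_aeval_add_sub x δ)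
  rw [trunc_derivative] at h₃
  convert dvd_add (dvd_sub (dvd_sub h₁ h₂) h₃) h₄ using 1
  ring

end PowerSeries

section Field

variable {K : Type*} [Field K]

theorem psderiv_eq_derivative (f : K⟦X⟧) : psderiv f = d⁄dX K f := by
  ext n
  simp [psderiv, coeff_derivative, mul_comm]

theorem constantCoeff_psint (f : K⟦X⟧) : constantCoeff (psint f) = 0 := by
  simp [psint, ← coeff_zero_eq_constantCoeff_apply]

theorem derivative_psint [CharZero K] (f : K⟦X⟧) : d⁄dX K (psint f) = f := by
  ext n
  have hn : (n + 1 : K) ≠ 0 := n.cast_add_one_ne_zero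
  simp only [coeff_derivative, psint, coeff_mk, if_neg n.succ_ne_zero, Nat.add_sub_cancel,
    Nat.cast_succ]
  field_simp

theorem psint_eq_of_derivative_eq [CharZero K] {f F : K⟦X⟧} (hF : d⁄dX K F = f)
    (hc : constantCoeff F = 0) : psint f = F :=
  derivative.ext (by rw [derivative_psint, hF]) (by rw [constantCoeff_psint, hc])

theorem constantCoeff_pscomp (f x : K⟦X⟧) : constantCoeff (pscomp f x) = constantCoeff f := by
  rw [← coeff_zero_eq_constantCoeff_apply, ← coeff_zero_eq_constantCoeff_apply, pscomp, coeff_mk]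
  simp

theorem pscomp_eq_subst {x : K⟦X⟧} (hx : constantCoeff x = 0) (f : K⟦X⟧) :
    pscomp f x = f.subst x := by
  ext n
  have h := X_pow_dvd_sub_iff.1 (X_pow_dvd_subst_sub_aeval_trunc hx f (n + 1)) n n.lt_succ_self
  rw [h, pscomp, coeff_mk, Polynomial.aeval_def, eval₂_trunc_eq_sum_range]
  rfl

end Field

open scoped Matrix

theorem Matrix.dvd_mulVec_apply {m n R : Type*} [Fintype n] [CommSemiring R] {a : R}
    (A : Matrix m n R) {v : n → R} (hv : ∀ j, a ∣ v j) (i : m) : a ∣ (A *ᵥ v) i :=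
  Finset.dvd_sum fun j _ => (hv j).mul_left _

section Hf

variable {K : Type*} [Field K] {g : ℕ} (f : Matrix (Fin g) (Fin g) K⟦X⟧)

noncomputable def hfPotential (Y : Fin g → K⟦X⟧) : Fin g → K⟦X⟧ :=
  fun i => ∑ j, (psint (f i j)).subst (Y j)

noncomputable def hfResidual (G Y : Fin g → K⟦X⟧) : Fin g → K⟦X⟧ :=
  fun i => psint (G i) - hfPotential f Y i

variable {f}

theorem Hf_apply {Y : Fin g → K⟦X⟧} (hY : ∀ j, constantCoeff (Y j) = 0) (i j : Fin g) :
    Hf f Y i j = (f i j).subst (Y j) :=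
  pscomp_eq_subst (hY j) _

theorem isUnit_det_Hf (hH0 : IsUnit (Hf0 f)) (Y : Fin g → K⟦X⟧) : IsUnit (Hf f Y).det := by
  have h : (Hf f Y).map constantCoeff = Hf0 f := by
    ext i j
    exact constantCoeff_pscomp _ _
  rw [isUnit_iff_constantCoeff, RingHom.map_det, RingHom.mapMatrix_apply, h]
  exact (Matrix.isUnit_iff_isUnit_det _).1 hH0

theorem constantCoeff_hfResidual {Y : Fin g → K⟦X⟧} (hY : ∀ j, constantCoeff (Y j) = 0)
    (G : Fin g → K⟦X⟧) (i : Fin g) : constantCoeff (hfResidual f G Y i) = 0 := by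
  rw [hfResidual, hfPotential, map_sub, constantCoeff_psint, map_sum, zero_sub, neg_eq_zero]
  exact Finset.sum_eq_zero fun j _ => constantCoeff_subst_eq_zero (hY j) _ (constantCoeff_psint _)

variable [CharZero K]

theorem derivative_hfResidual {Y : Fin g → K⟦X⟧} (hY : ∀ j, constantCoeff (Y j) = 0)
    (G : Fin g → K⟦X⟧) (i : Fin g) :
    d⁄dX K (hfResidual f G Y i) = G i - (Hf f Y *ᵥ fun j => d⁄dX K (Y j)) i := by
  simp [hfResidual, hfPotential, Matrix.mulVec, dotProduct, Hf_apply hY, derivative_psint,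
    derivative_subst (HasSubst.of_constantCoeff_zero' (hY _))]

theorem hfResidual_add_sub {Y Δ : Fin g → K⟦X⟧} (hY : ∀ j, constantCoeff (Y j) = 0)
    (hΔ0 : ∀ j, constantCoeff (Δ j) = 0) {n : ℕ} (hΔ : ∀ j, X ^ n ∣ Δ j) (G : Fin g → K⟦X⟧)
    (i : Fin g) :
    X ^ (2 * n) ∣ hfResidual f G Y i - hfResidual f G (Y + Δ) i - (Hf f Y *ᵥ Δ) i := by
  have h (j : Fin g) : X ^ (2 * n) ∣
      (psint (f i j)).subst (Y j + Δ j) - (psint (f i j)).subst (Y j) - Hf f Y i j * Δ j := by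
    simpa only [derivative_psint, ← Hf_apply hY] using
      X_pow_dvd_subst_add_sub (hY j) (hΔ0 j) (hΔ j) (psint (f i j))
  convert Finset.dvd_sum fun j (_ : j ∈ Finset.univ) => h j using 1
  simp [hfResidual, hfPotential, Matrix.mulVec, dotProduct, Finset.sum_sub_distrib]

end Hf

section Newton

variable {K : Type*} [Field K] [CharZero K] {g : ℕ} {f : Matrix (Fin g) (Fin g) K⟦X⟧}
  {G Y : Fin g → K⟦X⟧}

theorem newtonStep_eq_add (hY : ∀ j, constantCoeff (Y j) = 0) :
    newtonStep f G Y = Y + (Hf f Y)⁻¹ *ᵥ hfResidual f G Y := by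
  have h : (fun j => psint (G j - (Hf f Y *ᵥ fun i => d⁄dX K (Y i)) j)) = hfResidual f G Y :=
    funext fun j =>
      psint_eq_of_derivative_eq (derivative_hfResidual hY G j) (constantCoeff_hfResidual hY G j)
  funext i
  simp only [newtonStep, psderiv_eq_derivative, h, Pi.add_apply]

theorem constantCoeff_newtonStep (hY : ∀ j, constantCoeff (Y j) = 0) (i : Fin g) :
    constantCoeff (newtonStep f G Y i) = 0 := by
  rw [newtonStep_eq_add hY, Pi.add_apply, map_add, hY i, zero_add, ← X_dvd_iff]
  exact Matrix.dvd_mulVec_apply _ (fun j => X_dvd_iff.2 (constantCoeff_hfResidual hY G j)) i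

theorem X_pow_two_mul_dvd_hfResidual_newtonStep (hH0 : IsUnit (Hf0 f))
    (hY : ∀ j, constantCoeff (Y j) = 0) {n : ℕ} (hE : ∀ j, X ^ n ∣ hfResidual f G Y j)
    (i : Fin g) : X ^ (2 * n) ∣ hfResidual f G (newtonStep f G Y) i := by
  set Δ := (Hf f Y)⁻¹ *ᵥ hfResidual f G Y
  have hHΔ : Hf f Y *ᵥ Δ = hfResidual f G Y := by
    rw [Matrix.mulVec_mulVec, Matrix.mul_nonsing_inv _ (isUnit_det_Hf hH0 Y), Matrix.one_mulVec]
  have hΔ0 (j : Fin g) : constantCoeff (Δ j) = 0 := X_dvd_iff.1 <|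
    Matrix.dvd_mulVec_apply _ (fun j => X_dvd_iff.2 (constantCoeff_hfResidual hY G j)) j
  have h := hfResidual_add_sub (f := f) hY hΔ0 (Matrix.dvd_mulVec_apply _ hE) G i
  rwa [hHΔ, sub_sub_cancel_left, dvd_neg, ← newtonStep_eq_add hY] at h

end Newton

theorem newton_step_correct_general {K : Type*} [Field K] [CharZero K] {g : ℕ}
    (f : Matrix (Fin g) (Fin g) (PowerSeries K)) (hH0 : IsUnit (Hf0 f))
    (G : Fin g → PowerSeries K) (m : ℕ)
    (Xm : Fin g → PowerSeries K) (hXm0 : ∀ i, PowerSeries.constantCoeff (R := K) (Xm i) = 0)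
    (hXm : ∀ i, ∀ k < m,
      PowerSeries.coeff (R := K) k ((Hf f Xm).mulVec (fun i' => psderiv (Xm i')) i) =
        PowerSeries.coeff (R := K) k (G i)) :
    ∀ i, ∀ k < 2 * m,
      PowerSeries.coeff (R := K) k
          ((Hf f (newtonStep f G Xm)).mulVec
            (fun i' => psderiv (newtonStep f G Xm i')) i) =
        PowerSeries.coeff (R := K) k (G i) := by
  have hE (i : Fin g) : X ^ (m + 1) ∣ hfResidual f G Xm i := by
    refine X_pow_succ_dvd_of_derivative (constantCoeff_hfResidual hXm0 G i) ?_
    rw [derivative_hfResidual hXm0, X_pow_dvd_sub_iff]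
    simpa only [psderiv_eq_derivative, eq_comm] using hXm i
  intro i k hk
  have h := X_pow_dvd_derivative <| (pow_dvd_pow X (by omega : 2 * m + 1 ≤ 2 * (m + 1))).trans
    (X_pow_two_mul_dvd_hfResidual_newtonStep hH0 hXm0 hE i)
  rw [derivative_hfResidual (constantCoeff_newtonStep hXm0), X_pow_dvd_sub_iff] at h
  simpa only [psderiv_eq_derivative, eq_comm] using h k hk

/-- Newton iteration step for the nonlinear ODE system: if `X_m` solves
`H_f(X) · X' = G` modulo `t^m`, then the Newton update solves it modulo `t^{2m}`. -/
theorem newton_step_correct {K : Type*} [Field K] [CharZero K] {g : ℕ}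
    (f : Matrix (Fin g) (Fin g) (PowerSeries K)) (hH0 : IsUnit (Hf0 f))
    (G : Fin g → PowerSeries K) (m : ℕ) (hm : 0 < m)
    (Xm : Fin g → PowerSeries K) (hXm0 : ∀ i, PowerSeries.constantCoeff (R := K) (Xm i) = 0)
    (hXm : ∀ i, ∀ k < m,
      PowerSeries.coeff (R := K) k ((Hf f Xm).mulVec (fun i' => psderiv (Xm i')) i) =
        PowerSeries.coeff (R := K) k (G i)) :
    ∀ i, ∀ k < 2 * m,
      PowerSeries.coeff (R := K) k
          ((Hf f (newtonStep f G Xm)).mulVec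
            (fun i' => psderiv (newtonStep f G Xm i')) i) =
        PowerSeries.coeff (R := K) k (G i) :=
  newton_step_correct_general f hH0 G m Xm hXm0 hXm
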